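/- For every basic formula A whose atoms are among p_1, …, p_k and every tuple of formulas φ_1, …, φ_k, there exists a finite multiset Φ of modal Horn formulas all of whose atoms are angled atoms such that CK proves Φ, (A(φ̄))^t ⇒ A(φ̄^t), CK proves Φ, A(φ̄^t) ⇒ (A(φ̄))^t, and CK proves (⇒ ⋀Φ^s), where s is the standard substitution. -/
import Mathlib


set_option autoImplicit false

namespace UPT

/-- Modal formulas over atoms of type `α` (the language `ℒ = {∧,∨,→,⊤,⊥,□,◇}`). -/
inductive Fml (α : Type) : Type where
  | atom : α → Fml α
  | top  : Fml α
  | bot  : Fml α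
  | and  : Fml α → Fml α → Fml α
  | or   : Fml α → Fml α → Fml α
  | imp  : Fml α → Fml α → Fml α
  | box  : Fml α → Fml α
  | dia  : Fml α → Fml α
deriving DecidableEq

variable {α β : Type}

/-- Simultaneous substitution of formulas for atoms. -/
def Fml.subst (σ : β → Fml α) : Fml β → Fml α
  | .atom b  => σ b
  | .top     => .top
  | .bot     => .bot
  | .and A B => .and (A.subst σ) (B.subst σ)
  | .or A B  => .or (A.subst σ) (B.subst σ)
  | .imp A B => .imp (A.subst σ) (B.subst σ)
  | .box A   => .box (A.subst σ)
  | .dia A   => .dia (A.subst σ)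

/-- A sequent: a finite multiset antecedent together with a succedent
containing at most one formula. -/
abbrev Seq (α : Type) : Type := Multiset (Fml α) × Option (Fml α)

/-- A rule set relates a (finite) list of premise sequents to a conclusion sequent. -/
abbrev RuleSet (α : Type) : Type := List (Seq α) → Seq α → Prop

/-- The axioms and rules of the single-conclusion sequent calculus `LJ`, stated
schematically: they are closed under substituting arbitrary formulas for atoms
and arbitrary multisets (resp. succedents) for the context variables. -/
inductive LJRule : List (Seq α) → Seq α → Prop where
  | id (Γ : Multiset (Fml α)) (A : Fml α) : LJRule [] (A ::ₘ Γ, some A)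
  | botL (Γ : Multiset (Fml α)) (Δ : Option (Fml α)) : LJRule [] (.bot ::ₘ Γ, Δ)
  | topR (Γ : Multiset (Fml α)) : LJRule [] (Γ, some .top)
  | wL (A : Fml α) (Γ : Multiset (Fml α)) (Δ : Option (Fml α)) :
      LJRule [(Γ, Δ)] (A ::ₘ Γ, Δ)
  | wR (A : Fml α) (Γ : Multiset (Fml α)) : LJRule [(Γ, none)] (Γ, some A)
  | cL (A : Fml α) (Γ : Multiset (Fml α)) (Δ : Option (Fml α)) :
      LJRule [(A ::ₘ A ::ₘ Γ, Δ)] (A ::ₘ Γ, Δ)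
  | cut (A : Fml α) (Γ : Multiset (Fml α)) (Δ : Option (Fml α)) :
      LJRule [(Γ, some A), (A ::ₘ Γ, Δ)] (Γ, Δ)
  | andL₁ (A B : Fml α) (Γ : Multiset (Fml α)) (Δ : Option (Fml α)) :
      LJRule [(A ::ₘ Γ, Δ)] (.and A B ::ₘ Γ, Δ)
  | andL₂ (A B : Fml α) (Γ : Multiset (Fml α)) (Δ : Option (Fml α)) :
      LJRule [(B ::ₘ Γ, Δ)] (.and A B ::ₘ Γ, Δ)
  | andR (A B : Fml α) (Γ : Multiset (Fml α)) :
      LJRule [(Γ, some A), (Γ, some B)] (Γ, some (.and A B))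
  | orL (A B : Fml α) (Γ : Multiset (Fml α)) (Δ : Option (Fml α)) :
      LJRule [(A ::ₘ Γ, Δ), (B ::ₘ Γ, Δ)] (.or A B ::ₘ Γ, Δ)
  | orR₁ (A B : Fml α) (Γ : Multiset (Fml α)) : LJRule [(Γ, some A)] (Γ, some (.or A B))
  | orR₂ (A B : Fml α) (Γ : Multiset (Fml α)) : LJRule [(Γ, some B)] (Γ, some (.or A B))
  | impL (A B : Fml α) (Γ : Multiset (Fml α)) (Δ : Option (Fml α)) :
      LJRule [(Γ, some A), (B ::ₘ Γ, Δ)] (.imp A B ::ₘ Γ, Δ)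
  | impR (A B : Fml α) (Γ : Multiset (Fml α)) :
      LJRule [(A ::ₘ Γ, some B)] (Γ, some (.imp A B))

/-- The rule `K_□`: from `Γ ⇒ A` infer `□Γ ⇒ □A`. -/
inductive KBoxRule : List (Seq α) → Seq α → Prop where
  | mk (Γ : Multiset (Fml α)) (A : Fml α) :
      KBoxRule [(Γ, some A)] (Γ.map Fml.box, some (.box A))

/-- The rule `K_◇`: from `Γ, A ⇒ B` infer `□Γ, ◇A ⇒ ◇B`. -/
inductive KDiaRule : List (Seq α) → Seq α → Prop where
  | mk (Γ : Multiset (Fml α)) (A B : Fml α) :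
      KDiaRule [(A ::ₘ Γ, some B)] (.dia A ::ₘ Γ.map Fml.box, some (.dia B))

/-- The rule `◇L`: from `Γ, A ⇒ B` infer `Γ, ◇A ⇒ ◇B`. -/
inductive DiaLRule : List (Seq α) → Seq α → Prop where
  | mk (Γ : Multiset (Fml α)) (A B : Fml α) :
      DiaLRule [(A ::ₘ Γ, some B)] (.dia A ::ₘ Γ, some (.dia B))

/-- Adding a set `Ax` of axioms to a calculus: the initial sequents `⇒ σ(A)`
for every substitution instance `σ(A)` of every `A ∈ Ax`. -/
def axRule (Ax : Fml α → Prop) : RuleSet α := fun ps c =>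
  ps = [] ∧ ∃ (A : Fml α) (σ : α → Fml α), Ax A ∧ c = ((0 : Multiset (Fml α)), some (A.subst σ))

/-- Using a set of sequents as additional initial sequents (assumptions). -/
def hypRule (H : Set (Seq α)) : RuleSet α := fun ps c => ps = [] ∧ c ∈ H

/-- The sequent calculus `LJ+Ax`. -/
def LJSys (Ax : Fml α → Prop) : RuleSet α := fun ps c => LJRule ps c ∨ axRule Ax ps c

/-- The sequent calculus `CK+Ax = LJ + K_□ + K_◇ + Ax`. -/
def CKSys (Ax : Fml α → Prop) : RuleSet α := fun ps c =>
  LJRule ps c ∨ KBoxRule ps c ∨ KDiaRule ps c ∨ axRule Ax ps c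

/-- The sequent calculus `CK_□+Ax = LJ + K_□ + Ax`. -/
def CKBoxSys (Ax : Fml α → Prop) : RuleSet α := fun ps c =>
  LJRule ps c ∨ KBoxRule ps c ∨ axRule Ax ps c

/-- The sequent calculus `BLL+Ax = LJ + ◇L + Ax`. -/
def BLLSys (Ax : Fml α → Prop) : RuleSet α := fun ps c =>
  LJRule ps c ∨ DiaLRule ps c ∨ axRule Ax ps c

/-- Provability of a sequent in the calculus generated by a rule set. -/
inductive Derives (R : RuleSet α) : Multiset (Fml α) → Option (Fml α) → Prop where
  | step {ps : List (Seq α)} {c : Seq α} (hr : R ps c)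
      (hp : ∀ p ∈ ps, Derives R p.1 p.2) : Derives R c.1 c.2

/-- Basic formulas: generated from atoms, `⊤`, `⊥` by `∧`, `∨`, `◇`. -/
inductive Basic : Fml α → Prop where
  | atom (a : α) : Basic (.atom a)
  | top : Basic (.top : Fml α)
  | bot : Basic (.bot : Fml α)
  | and {A B : Fml α} : Basic A → Basic B → Basic (.and A B)
  | or {A B : Fml α} : Basic A → Basic B → Basic (.or A B)
  | dia {A : Fml α} : Basic A → Basic (.dia A)

/-- Almost positive formulas: generated from basic formulas by `∧`, `∨`, `□`, `◇`
and implications `A → B` with `A` basic and `B` almost positive. -/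
inductive AlmostPos : Fml α → Prop where
  | basic {A : Fml α} : Basic A → AlmostPos A
  | and {A B : Fml α} : AlmostPos A → AlmostPos B → AlmostPos (.and A B)
  | or {A B : Fml α} : AlmostPos A → AlmostPos B → AlmostPos (.or A B)
  | box {A : Fml α} : AlmostPos A → AlmostPos (.box A)
  | dia {A : Fml α} : AlmostPos A → AlmostPos (.dia A)
  | imp {A B : Fml α} : Basic A → AlmostPos B → AlmostPos (.imp A B)

/-- Constructive formulas: generated from basic formulas by `∧`, `□` and
implications `A → B` with `A` almost positive and `B` constructive. -/
inductive Constructive : Fml α → Prop where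
  | basic {A : Fml α} : Basic A → Constructive A
  | and {A B : Fml α} : Constructive A → Constructive B → Constructive (.and A B)
  | box {A : Fml α} : Constructive A → Constructive (.box A)
  | imp {A B : Fml α} : AlmostPos A → Constructive B → Constructive (.imp A B)

/-- Harrop formulas: atoms, `⊥`, `⊤`, closed under `∧`, `□`, and implications
`A → B` with `A` arbitrary and `B` Harrop. -/
inductive Harrop : Fml α → Prop where
  | atom (a : α) : Harrop (.atom a)
  | top : Harrop (.top : Fml α)
  | bot : Harrop (.bot : Fml α)
  | and {A B : Fml α} : Harrop A → Harrop B → Harrop (.and A B)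
  | box {A : Fml α} : Harrop A → Harrop (.box A)
  | imp (A : Fml α) {B : Fml α} : Harrop B → Harrop (.imp A B)

/-- Conjunction of a list of formulas (`⋀∅ = ⊤`). -/
def conj : List (Fml α) → Fml α
  | [] => .top
  | [A] => A
  | A :: B :: l => .and A (conj (B :: l))

/-- Disjunction of a list of formulas (`⋁∅ = ⊥`). -/
def disj : List (Fml α) → Fml α
  | [] => .bot
  | [A] => A
  | A :: B :: l => .or A (disj (B :: l))

/-- Disjunction of a succedent (at most one formula; `⋁∅ = ⊥`). -/
def odisj : Option (Fml α) → Fml α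
  | none => .bot
  | some A => A

/-- The multiset `{A_i → B_i}_{i ∈ I}` of implications of an indexed family. -/
def imps (AB : List (Fml α × Fml α)) : Multiset (Fml α) :=
  ↑(AB.map fun p => Fml.imp p.1 p.2)

/-- The conjunction `⋀_{i∈I} (A_i → B_i)` of an indexed family of implications. -/
def impConj (AB : List (Fml α × Fml α)) : Fml α :=
  conj (AB.map fun p => Fml.imp p.1 p.2)

/-- Truth in the one-node *irreflexive* frame `𝒦ᵢ` under a Boolean valuation:
`□A` is always true and `◇A` is always false; the propositional connectives
are evaluated classically. -/
def evalI (v : α → Bool) : Fml α → Bool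
  | .atom a  => v a
  | .top     => true
  | .bot     => false
  | .and A B => evalI v A && evalI v B
  | .or A B  => evalI v A || evalI v B
  | .imp A B => !evalI v A || evalI v B
  | .box _   => true
  | .dia _   => false

/-- Truth in the one-node *reflexive* frame `𝒦ᵣ` under a Boolean valuation:
`□A` and `◇A` take the value of `A`. -/
def evalR (v : α → Bool) : Fml α → Bool
  | .atom a  => v a
  | .top     => true
  | .bot     => false
  | .and A B => evalR v A && evalR v B
  | .or A B  => evalR v A || evalR v B
  | .imp A B => !evalR v A || evalR v B
  | .box A   => evalR v A
  | .dia A   => evalR v A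

/-- Validity of a sequent with respect to a one-node semantics: under every
valuation, if all formulas of the antecedent are true then so is the succedent. -/
def SeqValid (ev : (α → Bool) → Fml α → Bool) (Γ : Multiset (Fml α)) (Δ : Option (Fml α)) :
    Prop :=
  ∀ v : α → Bool, (∀ A ∈ Γ, ev v A = true) → ∃ B ∈ Δ, ev v B = true

/-- `CK+Ax` is T-free: every provable sequent is valid in the irreflexive node frame. -/
def TFree (Ax : Fml α → Prop) : Prop :=
  ∀ (Γ : Multiset (Fml α)) (Δ : Option (Fml α)), Derives (CKSys Ax) Γ Δ → SeqValid evalI Γ Δ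

/-- `CK+Ax` is T-full: every provable sequent is valid in the reflexive node
frame and the calculus proves `⇒ □p → p` and `⇒ p → ◇p`. -/
def TFull (Ax : Fml α → Prop) : Prop :=
  (∀ (Γ : Multiset (Fml α)) (Δ : Option (Fml α)), Derives (CKSys Ax) Γ Δ → SeqValid evalR Γ Δ) ∧
  (∀ a : α, Derives (CKSys Ax) 0 (some (.imp (.box (.atom a)) (.atom a)))) ∧
  (∀ a : α, Derives (CKSys Ax) 0 (some (.imp (.atom a) (.dia (.atom a)))))

/-- Classical validity of a (modality-free) sequent: `⋀Γ → ⋁Δ` is true under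
every Boolean valuation of the atoms. -/
def ClValid (Γ : Multiset (Fml α)) (Δ : Option (Fml α)) : Prop :=
  ∀ v : α → Bool, (∀ A ∈ Γ, evalI v A = true) → ∃ B ∈ Δ, evalI v B = true

/-- Nonempty conjunctions of atoms. -/
inductive AtomConj : Fml α → Prop where
  | single (a : α) : AtomConj (.atom a)
  | and {A B : Fml α} : AtomConj A → AtomConj B → AtomConj (.and A B)

/-- Implicational Horn formulas: `⊥`, atoms, and implications `⋀Q → r` with `Q`
a nonempty multiset of atoms and `r` an atom or `⊥`. -/
inductive ImpHorn : Fml α → Prop where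
  | bot : ImpHorn (.bot : Fml α)
  | atom (a : α) : ImpHorn (.atom a)
  | impAtom {A : Fml α} (hA : AtomConj A) (a : α) : ImpHorn (.imp A (.atom a))
  | impBot {A : Fml α} (hA : AtomConj A) : ImpHorn (.imp A .bot)

/-- Formulas of the form `◇^n p` with `p` an atom and `n ≥ 0`. -/
inductive DiaPowAtom : Fml α → Prop where
  | atom (a : α) : DiaPowAtom (.atom a)
  | dia {A : Fml α} : DiaPowAtom A → DiaPowAtom (.dia A)

/-- Nonempty conjunctions `⋀_{i=1}^k ◇^{n_i} p_i` of formulas `◇^{n_i} p_i`. -/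
inductive DiaConj : Fml α → Prop where
  | single {A : Fml α} : DiaPowAtom A → DiaConj A
  | and {A B : Fml α} : DiaConj A → DiaConj B → DiaConj (.and A B)

/-- Modal Horn formulas: `⊥` and atoms, closed under `□` and under implications
`A → B` with `A = ⋀_{i=1}^k ◇^{n_i} p_i` and `B` modal Horn. -/
inductive ModalHorn : Fml α → Prop where
  | bot : ModalHorn (.bot : Fml α)
  | atom (a : α) : ModalHorn (.atom a)
  | box {A : Fml α} : ModalHorn A → ModalHorn (.box A)
  | imp {A B : Fml α} : DiaConj A → ModalHorn B → ModalHorn (.imp A B)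

/-- The predicate "all atoms of the formula satisfy `P`". -/
def Fml.AtomsIn (P : α → Prop) : Fml α → Prop
  | .atom a  => P a
  | .top     => True
  | .bot     => True
  | .and A B => A.AtomsIn P ∧ B.AtomsIn P
  | .or A B  => A.AtomsIn P ∧ B.AtomsIn P
  | .imp A B => A.AtomsIn P ∧ B.AtomsIn P
  | .box A   => A.AtomsIn P
  | .dia A   => A.AtomsIn P

/-- No `◇` occurs in the formula. -/
def Fml.DiaFree : Fml α → Prop
  | .atom _  => True
  | .top     => True
  | .bot     => True
  | .and A B => A.DiaFree ∧ B.DiaFree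
  | .or A B  => A.DiaFree ∧ B.DiaFree
  | .imp A B => A.DiaFree ∧ B.DiaFree
  | .box A   => A.DiaFree
  | .dia _   => False

/-- No `□` occurs in the formula. -/
def Fml.BoxFree : Fml α → Prop
  | .atom _  => True
  | .top     => True
  | .bot     => True
  | .and A B => A.BoxFree ∧ B.BoxFree
  | .or A B  => A.BoxFree ∧ B.BoxFree
  | .imp A B => A.BoxFree ∧ B.BoxFree
  | .box _   => False
  | .dia A   => A.BoxFree

/-- The formula is modality-free (propositional). -/
def Fml.ModFree : Fml α → Prop
  | .atom _  => True
  | .top     => True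
  | .bot     => True
  | .and A B => A.ModFree ∧ B.ModFree
  | .or A B  => A.ModFree ∧ B.ModFree
  | .imp A B => A.ModFree ∧ B.ModFree
  | .box _   => False
  | .dia _   => False

/-- An angling of the language: an injection `φ ↦ ⟨φ⟩` from formulas into the
atoms whose image (the angled atoms) is disjoint from a fixed infinite set of
plain atoms. -/
structure Angling (α : Type) where
  angle : Fml α → α
  plain : Set α
  inj : Function.Injective angle
  plain_infinite : plain.Infinite
  disjoint : ∀ φ : Fml α, angle φ ∉ plain

/-- `a` is an angled atom. -/
def Angling.Angled (S : Angling α) (a : α) : Prop := ∃ φ : Fml α, S.angle φ = a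

/-- The translation `t`: `⊥^t = ⊥`, `p^t = ⟨p⟩`, `⊤^t = ⟨⊤⟩`,
`(A ∘ B)^t = (A^t ∘ B^t) ∧ ⟨A ∘ B⟩` and `(○A)^t = (○A^t) ∧ ⟨○A⟩`. -/
def Angling.tr (S : Angling α) : Fml α → Fml α
  | .atom a  => .atom (S.angle (.atom a))
  | .top     => .atom (S.angle .top)
  | .bot     => .bot
  | .and A B => .and (.and (S.tr A) (S.tr B)) (.atom (S.angle (.and A B)))
  | .or A B  => .and (.or (S.tr A) (S.tr B)) (.atom (S.angle (.or A B)))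
  | .imp A B => .and (.imp (S.tr A) (S.tr B)) (.atom (S.angle (.imp A B)))
  | .box A   => .and (.box (S.tr A)) (.atom (S.angle (.box A)))
  | .dia A   => .and (.dia (S.tr A)) (.atom (S.angle (.dia A)))

/-- Action of the standard substitution on atoms: an angled atom `⟨φ⟩` is sent
to `φ`; plain atoms are fixed. -/
noncomputable def Angling.stdAtom (S : Angling α) (a : α) : Fml α :=
  haveI := Classical.propDecidable (∃ φ : Fml α, S.angle φ = a)
  if h : ∃ φ : Fml α, S.angle φ = a then h.choose else .atom a

/-- The standard substitution `s`: replaces each angled atom `⟨φ⟩` by `φ`,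
fixes the plain atoms, and commutes with all connectives. -/
noncomputable def Angling.std (S : Angling α) : Fml α → Fml α :=
  Fml.subst S.stdAtom

/-- The Visser–Harrop property of a calculus. -/
def VisserHarrop (R : RuleSet α) : Prop :=
  ∀ (Γ : Multiset (Fml α)), (∀ A ∈ Γ, Harrop A) →
  ∀ (AB : List (Fml α × Fml α)) (C D : Fml α),
    Derives R (Γ + imps AB) (some (.or C D)) →
    Derives R (Γ + imps AB) (some C) ∨
    Derives R (Γ + imps AB) (some D) ∨
    ∃ p ∈ AB, Derives R (Γ + imps AB) (some p.1)

/-- The disjunction property of a calculus. -/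
def DisjProp (R : RuleSet α) : Prop :=
  ∀ C D : Fml α, Derives R 0 (some (.or C D)) →
    Derives R 0 (some C) ∨ Derives R 0 (some D)

/-- The formula interpretation `I(Γ ⇒ Δ) = ⋀Γ → ⋁Δ` belongs to `L` (stated for
every enumeration of the antecedent multiset as a list). -/
def interpIn (L : Set (Fml α)) (s : Seq α) : Prop :=
  ∀ l : List (Fml α), (↑l : Multiset (Fml α)) = s.1 → Fml.imp (conj l) (odisj s.2) ∈ L

/- Named modal axioms (with `p := atom 0`, `q := atom 1`). -/
def axTa : Fml ℕ := .imp (.box (.atom 0)) (.atom 0)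
def axTb : Fml ℕ := .imp (.atom 0) (.dia (.atom 0))
def axBa : Fml ℕ := .imp (.dia (.box (.atom 0))) (.atom 0)
def axBb : Fml ℕ := .imp (.atom 0) (.box (.dia (.atom 0)))
def ax4a : Fml ℕ := .imp (.box (.atom 0)) (.box (.box (.atom 0)))
def ax4b : Fml ℕ := .imp (.dia (.dia (.atom 0))) (.dia (.atom 0))
def ax5a : Fml ℕ := .imp (.dia (.box (.atom 0))) (.box (.atom 0))
def ax5b : Fml ℕ := .imp (.dia (.atom 0)) (.box (.dia (.atom 0)))
def axDiaBot : Fml ℕ := .imp (.dia .bot) .bot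
def axDiaOr : Fml ℕ :=
  .imp (.dia (.or (.atom 0) (.atom 1))) (.or (.dia (.atom 0)) (.dia (.atom 1)))
def axBoxImp : Fml ℕ :=
  .imp (.imp (.dia (.atom 0)) (.box (.atom 1))) (.box (.imp (.atom 0) (.atom 1)))

/-- The axioms of `X ⊆ {T, B, 4, 5}` in both their `a`- and `b`-versions. -/
def XAxioms (tT tB t4 t5 : Bool) : Set (Fml ℕ) :=
  (if tT then ({axTa, axTb} : Set (Fml ℕ)) else ∅) ∪
  (if tB then ({axBa, axBb} : Set (Fml ℕ)) else ∅) ∪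
  (if t4 then ({ax4a, ax4b} : Set (Fml ℕ)) else ∅) ∪
  (if t5 then ({ax5a, ax5b} : Set (Fml ℕ)) else ∅)

/-- The additional axioms of `IK` over `CK`. -/
def IKExtra : Set (Fml ℕ) := {axDiaBot, axDiaOr, axBoxImp}

/-- The right rule with premises `{Γ, φ̄_i ⇒ ψ̄_i}_{i∈I}` and conclusion
`Γ, θ̄ ⇒ η̄`, closed under all substitutions of formulas for atoms and
multisets for the context `Γ`. -/
def rightRuleInst (prems : List (List (Fml α) × Option (Fml α)))
    (θ : List (Fml α)) (η : Option (Fml α)) : RuleSet α := fun ps c =>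
  ∃ (σ : α → Fml α) (Γ : Multiset (Fml α)),
    ps = prems.map (fun pr =>
        ((Γ + ↑(pr.1.map (Fml.subst σ)) : Multiset (Fml α)), pr.2.map (Fml.subst σ))) ∧
    c = ((Γ + ↑(θ.map (Fml.subst σ)) : Multiset (Fml α)), η.map (Fml.subst σ))

/-- The left rule with premises `{Γ, φ̄_i ⇒ ψ̄_i}_{i∈I} ∪ {Γ, θ̄_j ⇒ Δ}_{j∈J}`
and conclusion `Γ, η̄ ⇒ Δ`, closed under all substitutions of formulas for
atoms and multisets for `Γ` and `Δ`. -/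
def leftRuleInst (prems : List (List (Fml α) × Option (Fml α)))
    (lefts : List (List (Fml α))) (η : List (Fml α)) : RuleSet α := fun ps c =>
  ∃ (σ : α → Fml α) (Γ : Multiset (Fml α)) (Δ : Option (Fml α)),
    ps = prems.map (fun pr =>
          ((Γ + ↑(pr.1.map (Fml.subst σ)) : Multiset (Fml α)), pr.2.map (Fml.subst σ)))
        ++ lefts.map (fun θj => ((Γ + ↑(θj.map (Fml.subst σ)) : Multiset (Fml α)), Δ)) ∧
    c = ((Γ + ↑(η.map (Fml.subst σ)) : Multiset (Fml α)), Δ)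

/-- The formula `Ax_R` of a right rule. -/
def AxRight (prems : List (List (Fml α) × Option (Fml α)))
    (θ : List (Fml α)) (η : Option (Fml α)) : Fml α :=
  .imp (.and (conj (prems.map fun pr => .imp (conj pr.1) (odisj pr.2))) (conj θ)) (odisj η)

/-- The formula `Ax_R` of a left rule. -/
def AxLeft (prems : List (List (Fml α) × Option (Fml α)))
    (lefts : List (List (Fml α))) (η : List (Fml α)) : Fml α :=
  .imp (.and (conj (prems.map fun pr => .imp (conj pr.1) (odisj pr.2))) (conj η))
    (disj (lefts.map conj))

/-- The forgetful translation `f_i`: fixes atoms, `⊤`, `⊥`, commutes with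
`∧`, `∨`, `→`, `□`, and sends every `◇A` to `⊥`. -/
def fi : Fml α → Fml α
  | .atom a  => .atom a
  | .top     => .top
  | .bot     => .bot
  | .and A B => .and (fi A) (fi B)
  | .or A B  => .or (fi A) (fi B)
  | .imp A B => .imp (fi A) (fi B)
  | .box A   => .box (fi A)
  | .dia _   => .bot

/-- The forgetful translation `f_r`: fixes atoms, `⊤`, `⊥`, commutes with
`∧`, `∨`, `→`, `□`, and sends `◇A` to `f_r A`. -/
def fr : Fml α → Fml α
  | .atom a  => .atom a
  | .top     => .top
  | .bot     => .bot
  | .and A B => .and (fr A) (fr B)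
  | .or A B  => .or (fr A) (fr B)
  | .imp A B => .imp (fr A) (fr B)
  | .box A   => .box (fr A)
  | .dia A   => fr A


/-! ### Infrastructure for statement 5 -/

section Stmt5

/-- Abbreviation for derivability in pure `CK`. -/
abbrev CKD (Γ : Multiset (Fml ℕ)) (Δ : Option (Fml ℕ)) : Prop :=
  Derives (CKSys (fun _ : Fml ℕ => False)) Γ Δ

private abbrev CK0 : RuleSet ℕ := CKSys (fun _ : Fml ℕ => False)

lemma CKD.step0 {Γ : Multiset (Fml ℕ)} {Δ : Option (Fml ℕ)}
    (hr : CK0 [] (Γ, Δ)) : CKD Γ Δ :=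
  Derives.step (c := (Γ, Δ)) hr (by intro p hp; cases hp)

lemma CKD.step1 {Γ₁ Γ : Multiset (Fml ℕ)} {Δ₁ Δ : Option (Fml ℕ)}
    (hr : CK0 [(Γ₁, Δ₁)] (Γ, Δ)) (h1 : CKD Γ₁ Δ₁) : CKD Γ Δ :=
  Derives.step (c := (Γ, Δ)) hr
    (by intro p hp; simp only [List.mem_singleton] at hp; subst hp; exact h1)

lemma CKD.step2 {Γ₁ Γ₂ Γ : Multiset (Fml ℕ)} {Δ₁ Δ₂ Δ : Option (Fml ℕ)}
    (hr : CK0 [(Γ₁, Δ₁), (Γ₂, Δ₂)] (Γ, Δ)) (h1 : CKD Γ₁ Δ₁) (h2 : CKD Γ₂ Δ₂) : CKD Γ Δ :=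
  Derives.step (c := (Γ, Δ)) hr
    (by
      intro p hp
      simp only [List.mem_cons, List.mem_singleton, List.not_mem_nil, or_false] at hp
      rcases hp with rfl | rfl
      · exact h1
      · exact h2)

lemma CKD.id {A : Fml ℕ} {Γ : Multiset (Fml ℕ)} : CKD (A ::ₘ Γ) (some A) :=
  CKD.step0 (Or.inl (LJRule.id Γ A))

lemma CKD.id_mem {A : Fml ℕ} {Γ : Multiset (Fml ℕ)} (h : A ∈ Γ) : CKD Γ (some A) := by
  rw [← Multiset.cons_erase h]; exact CKD.id

lemma CKD.botL {Γ : Multiset (Fml ℕ)} {Δ : Option (Fml ℕ)} : CKD (Fml.bot ::ₘ Γ) Δ :=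
  CKD.step0 (Or.inl (LJRule.botL Γ Δ))

lemma CKD.topR {Γ : Multiset (Fml ℕ)} : CKD Γ (some .top) :=
  CKD.step0 (Or.inl (LJRule.topR Γ))

lemma CKD.wL {A : Fml ℕ} {Γ : Multiset (Fml ℕ)} {Δ : Option (Fml ℕ)}
    (h : CKD Γ Δ) : CKD (A ::ₘ Γ) Δ :=
  CKD.step1 (Or.inl (LJRule.wL A Γ Δ)) h

lemma CKD.weak {Γ Γ' : Multiset (Fml ℕ)} {Δ : Option (Fml ℕ)}
    (h : CKD Γ Δ) (hle : Γ ≤ Γ') : CKD Γ' Δ := by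
  obtain ⟨u, rfl⟩ := Multiset.le_iff_exists_add.mp hle
  clear hle
  induction u using Multiset.induction with
  | empty => simpa using h
  | cons a u ih => rw [Multiset.add_cons]; exact ih.wL

lemma CKD.contract_mem {A : Fml ℕ} {Γ : Multiset (Fml ℕ)} {Δ : Option (Fml ℕ)}
    (hm : A ∈ Γ) (h : CKD (A ::ₘ Γ) Δ) : CKD Γ Δ := by
  obtain ⟨Γ', rfl⟩ : ∃ Γ', Γ = A ::ₘ Γ' := ⟨Γ.erase A, (Multiset.cons_erase hm).symm⟩
  exact CKD.step1 (Or.inl (LJRule.cL A Γ' Δ)) h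

lemma CKD.cut {A : Fml ℕ} {Γ : Multiset (Fml ℕ)} {Δ : Option (Fml ℕ)}
    (h1 : CKD Γ (some A)) (h2 : CKD (A ::ₘ Γ) Δ) : CKD Γ Δ :=
  CKD.step2 (Or.inl (LJRule.cut A Γ Δ)) h1 h2

lemma CKD.andR {A B : Fml ℕ} {Γ : Multiset (Fml ℕ)}
    (h1 : CKD Γ (some A)) (h2 : CKD Γ (some B)) : CKD Γ (some (.and A B)) :=
  CKD.step2 (Or.inl (LJRule.andR A B Γ)) h1 h2

lemma CKD.andL₁ {A B : Fml ℕ} {Γ : Multiset (Fml ℕ)} {Δ : Option (Fml ℕ)}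
    (h : CKD (A ::ₘ Γ) Δ) : CKD (.and A B ::ₘ Γ) Δ :=
  CKD.step1 (Or.inl (LJRule.andL₁ A B Γ Δ)) h

lemma CKD.andL₂ {A B : Fml ℕ} {Γ : Multiset (Fml ℕ)} {Δ : Option (Fml ℕ)}
    (h : CKD (B ::ₘ Γ) Δ) : CKD (.and A B ::ₘ Γ) Δ :=
  CKD.step1 (Or.inl (LJRule.andL₂ A B Γ Δ)) h

/-- Invertible-style left conjunction: from `A, B, Γ ⇒ Δ` infer `A∧B, Γ ⇒ Δ`. -/
lemma CKD.andL {A B : Fml ℕ} {Γ : Multiset (Fml ℕ)} {Δ : Option (Fml ℕ)}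
    (h : CKD (A ::ₘ B ::ₘ Γ) Δ) : CKD (.and A B ::ₘ Γ) Δ := by
  apply CKD.contract_mem (Multiset.mem_cons_self _ _)
  apply CKD.andL₁
  rw [Multiset.cons_swap]
  apply CKD.andL₂
  rw [Multiset.cons_swap]
  exact h

lemma CKD.orR₁ {A B : Fml ℕ} {Γ : Multiset (Fml ℕ)}
    (h : CKD Γ (some A)) : CKD Γ (some (.or A B)) :=
  CKD.step1 (Or.inl (LJRule.orR₁ A B Γ)) h

lemma CKD.orR₂ {A B : Fml ℕ} {Γ : Multiset (Fml ℕ)}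
    (h : CKD Γ (some B)) : CKD Γ (some (.or A B)) :=
  CKD.step1 (Or.inl (LJRule.orR₂ A B Γ)) h

lemma CKD.orL {A B : Fml ℕ} {Γ : Multiset (Fml ℕ)} {Δ : Option (Fml ℕ)}
    (h1 : CKD (A ::ₘ Γ) Δ) (h2 : CKD (B ::ₘ Γ) Δ) : CKD (.or A B ::ₘ Γ) Δ :=
  CKD.step2 (Or.inl (LJRule.orL A B Γ Δ)) h1 h2

lemma CKD.impR {A B : Fml ℕ} {Γ : Multiset (Fml ℕ)}
    (h : CKD (A ::ₘ Γ) (some B)) : CKD Γ (some (.imp A B)) :=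
  CKD.step1 (Or.inl (LJRule.impR A B Γ)) h

lemma CKD.impL {A B : Fml ℕ} {Γ : Multiset (Fml ℕ)} {Δ : Option (Fml ℕ)}
    (h1 : CKD Γ (some A)) (h2 : CKD (B ::ₘ Γ) Δ) : CKD (.imp A B ::ₘ Γ) Δ :=
  CKD.step2 (Or.inl (LJRule.impL A B Γ Δ)) h1 h2

lemma CKD.kbox {A : Fml ℕ} {Γ : Multiset (Fml ℕ)}
    (h : CKD Γ (some A)) : CKD (Γ.map .box) (some (.box A)) :=
  CKD.step1 (Or.inr (Or.inl (KBoxRule.mk Γ A))) h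

lemma CKD.kdia {A B : Fml ℕ} {Γ : Multiset (Fml ℕ)}
    (h : CKD (A ::ₘ Γ) (some B)) :
    CKD (.dia A ::ₘ Γ.map .box) (some (.dia B)) :=
  CKD.step1 (Or.inr (Or.inr (Or.inl (KDiaRule.mk Γ A B)))) h

/-- Use an implication that occurs somewhere in the context. -/
lemma CKD.impL_mem {A B : Fml ℕ} {Γ : Multiset (Fml ℕ)} {Δ : Option (Fml ℕ)}
    (hm : .imp A B ∈ Γ) (h1 : CKD Γ (some A)) (h2 : CKD (B ::ₘ Γ) Δ) : CKD Γ Δ :=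
  CKD.contract_mem hm (CKD.impL h1 h2)

lemma le_cons_of_le {a : Fml ℕ} {s t : Multiset (Fml ℕ)} (h : s ≤ t) : s ≤ a ::ₘ t :=
  le_trans h (Multiset.le_cons_self _ _)

/-- Head lemma: `Γ, ψ^t ⇒ ⟨ψ⟩` for every formula `ψ`. -/
lemma head_lemma (S : Angling ℕ) (ψ : Fml ℕ) (Γ : Multiset (Fml ℕ)) :
    CKD (S.tr ψ ::ₘ Γ) (some (.atom (S.angle ψ))) := by
  cases ψ with
  | atom a => exact CKD.id
  | top => exact CKD.id
  | bot => exact CKD.botL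
  | and A B => exact CKD.andL₂ CKD.id
  | or A B => exact CKD.andL₂ CKD.id
  | imp A B => exact CKD.andL₂ CKD.id
  | box A => exact CKD.andL₂ CKD.id
  | dia A => exact CKD.andL₂ CKD.id

lemma std_angle (S : Angling ℕ) (ψ : Fml ℕ) : S.std (.atom (S.angle ψ)) = ψ := by
  have h : ∃ χ : Fml ℕ, S.angle χ = S.angle ψ := ⟨ψ, rfl⟩
  show S.stdAtom (S.angle ψ) = ψ
  unfold Angling.stdAtom
  rw [dif_pos h]
  exact S.inj h.choose_spec

lemma angled_angle (S : Angling ℕ) (ψ : Fml ℕ) : S.Angled (S.angle ψ) := ⟨ψ, rfl⟩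

lemma conj_of_all {l : List (Fml ℕ)} (h : ∀ F ∈ l, CKD 0 (some F)) :
    CKD 0 (some (conj l)) := by
  induction l with
  | nil => exact CKD.topR
  | cons A l ih =>
    cases l with
    | nil => exact h A (by simp)
    | cons B l =>
      exact CKD.andR (h A (by simp))
        (ih (fun F hF => h F (List.mem_cons_of_mem _ hF)))

private lemma aux_5 (S : Angling ℕ) (k : ℕ) (A : Fml (Fin k)) (hA : Basic A)
    (φ : Fin k → Fml ℕ) :
    ∃ Φ : List (Fml ℕ),
      (∀ F ∈ Φ, ModalHorn F ∧ F.AtomsIn S.Angled ∧ CKD 0 (some (S.std F))) ∧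
      CKD (S.tr (A.subst φ) ::ₘ (↑Φ : Multiset (Fml ℕ)))
        (some (A.subst fun i => S.tr (φ i))) ∧
      CKD ((A.subst fun i => S.tr (φ i)) ::ₘ (↑Φ : Multiset (Fml ℕ)))
        (some (S.tr (A.subst φ))) := by
  induction hA with
  | atom i =>
    exact ⟨[], by simp, CKD.id, CKD.id⟩
  | top =>
    refine ⟨[.atom (S.angle .top)], ?_, CKD.topR, ?_⟩
    · rintro F hF
      simp only [List.mem_singleton] at hF
      subst hF
      exact ⟨ModalHorn.atom _, angled_angle S _, by rw [std_angle]; exact CKD.topR⟩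
    · show CKD (Fml.top ::ₘ ↑[Fml.atom (S.angle .top)]) (some (.atom (S.angle .top)))
      exact CKD.id_mem (by simp)
  | bot =>
    exact ⟨[], by simp, CKD.botL, CKD.botL⟩
  | @and A B hA hB ihA ihB =>
    obtain ⟨ΦA, hstA, h1A, h2A⟩ := ihA
    obtain ⟨ΦB, hstB, h1B, h2B⟩ := ihB
    set Aφ := A.subst φ with hAφ
    set Bφ := B.subst φ with hBφ
    set Aφt := A.subst (fun i => S.tr (φ i)) with hAφt
    set Bφt := B.subst (fun i => S.tr (φ i)) with hBφt
    set G : Fml ℕ := .imp (.and (.atom (S.angle Aφ)) (.atom (S.angle Bφ)))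
      (.atom (S.angle (.and Aφ Bφ))) with hG
    refine ⟨ΦA ++ ΦB ++ [G], ?_, ?_, ?_⟩
    · intro F hF
      simp only [List.mem_append, List.mem_singleton] at hF
      rcases hF with (hF | hF) | rfl
      · exact hstA F hF
      · exact hstB F hF
      · refine ⟨ModalHorn.imp (DiaConj.and (.single (.atom _)) (.single (.atom _)))
          (ModalHorn.atom _), ⟨⟨angled_angle S _, angled_angle S _⟩, angled_angle S _⟩, ?_⟩
        show CKD 0 (some (.imp (.and (S.std (.atom (S.angle Aφ))) (S.std (.atom (S.angle Bφ))))
          (S.std (.atom (S.angle (.and Aφ Bφ))))))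
        rw [std_angle, std_angle, std_angle]
        exact CKD.impR CKD.id
    · -- Φ, tr((A∧B)φ) ⇒ A(φᵗ) ∧ B(φᵗ)
      show CKD (.and (.and (S.tr Aφ) (S.tr Bφ)) (.atom (S.angle (.and Aφ Bφ))) ::ₘ
        ↑(ΦA ++ ΦB ++ [G])) (some (.and Aφt Bφt))
      apply CKD.andL₁
      apply CKD.andL
      refine CKD.andR ?_ ?_
      · refine h1A.weak ?_
        refine Multiset.cons_le_cons _ (le_cons_of_le ?_)
        simp only [← Multiset.coe_add]
        exact le_trans (Multiset.le_add_right _ _) (Multiset.le_add_right _ _)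
      · refine (h1B.weak ?_).weak (Multiset.le_cons_self _ _)
        refine Multiset.cons_le_cons _ ?_
        simp only [← Multiset.coe_add]
        exact le_trans (Multiset.le_add_left _ _) (Multiset.le_add_right _ _)
    · -- Φ, A(φᵗ) ∧ B(φᵗ) ⇒ tr((A∧B)φ)
      show CKD (.and Aφt Bφt ::ₘ ↑(ΦA ++ ΦB ++ [G]))
        (some (.and (.and (S.tr Aφ) (S.tr Bφ)) (.atom (S.angle (.and Aφ Bφ)))))
      apply CKD.andL
      have hcut1 : CKD (Aφt ::ₘ Bφt ::ₘ ↑(ΦA ++ ΦB ++ [G])) (some (S.tr Aφ)) := by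
        refine h2A.weak (Multiset.cons_le_cons _ (le_cons_of_le ?_))
        simp only [← Multiset.coe_add]
        exact le_trans (Multiset.le_add_right _ _) (Multiset.le_add_right _ _)
      refine CKD.cut hcut1 ?_
      have hcut2 : CKD (S.tr Aφ ::ₘ Aφt ::ₘ Bφt ::ₘ ↑(ΦA ++ ΦB ++ [G])) (some (S.tr Bφ)) := by
        refine h2B.weak ?_
        refine le_cons_of_le ?_
        rw [Multiset.cons_swap]
        refine Multiset.cons_le_cons _ (le_cons_of_le ?_)
        simp only [← Multiset.coe_add]
        exact le_trans (Multiset.le_add_left _ _) (Multiset.le_add_right _ _)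
      refine CKD.cut hcut2 ?_
      refine CKD.andR (CKD.andR (CKD.id_mem (by simp)) (CKD.id_mem (by simp))) ?_
      refine CKD.impL_mem (A := .and (.atom (S.angle Aφ)) (.atom (S.angle Bφ)))
        (B := .atom (S.angle (.and Aφ Bφ))) (by simp [hG]) ?_ (CKD.id_mem (by simp))
      refine CKD.andR ?_ ?_
      · exact CKD.contract_mem (by simp) (head_lemma S Aφ _)
      · exact CKD.contract_mem (A := S.tr Bφ) (by simp) (head_lemma S Bφ _)
  | @or A B hA hB ihA ihB =>
    obtain ⟨ΦA, hstA, h1A, h2A⟩ := ihA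
    obtain ⟨ΦB, hstB, h1B, h2B⟩ := ihB
    set Aφ := A.subst φ with hAφ
    set Bφ := B.subst φ with hBφ
    set Aφt := A.subst (fun i => S.tr (φ i)) with hAφt
    set Bφt := B.subst (fun i => S.tr (φ i)) with hBφt
    set G1 : Fml ℕ := .imp (.atom (S.angle Aφ)) (.atom (S.angle (.or Aφ Bφ))) with hG1
    set G2 : Fml ℕ := .imp (.atom (S.angle Bφ)) (.atom (S.angle (.or Aφ Bφ))) with hG2
    refine ⟨ΦA ++ ΦB ++ [G1, G2], ?_, ?_, ?_⟩
    · intro F hF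
      simp only [List.mem_append, List.mem_cons, List.mem_singleton,
        List.not_mem_nil, or_false] at hF
      rcases hF with (hF | hF) | rfl | rfl
      · exact hstA F hF
      · exact hstB F hF
      · refine ⟨ModalHorn.imp (DiaConj.single (.atom _)) (ModalHorn.atom _),
          ⟨angled_angle S _, angled_angle S _⟩, ?_⟩
        show CKD 0 (some (.imp (S.std (.atom (S.angle Aφ)))
          (S.std (.atom (S.angle (.or Aφ Bφ))))))
        rw [std_angle, std_angle]
        exact CKD.impR (CKD.orR₁ CKD.id)
      · refine ⟨ModalHorn.imp (DiaConj.single (.atom _)) (ModalHorn.atom _),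
          ⟨angled_angle S _, angled_angle S _⟩, ?_⟩
        show CKD 0 (some (.imp (S.std (.atom (S.angle Bφ)))
          (S.std (.atom (S.angle (.or Aφ Bφ))))))
        rw [std_angle, std_angle]
        exact CKD.impR (CKD.orR₂ CKD.id)
    · show CKD (.and (.or (S.tr Aφ) (S.tr Bφ)) (.atom (S.angle (.or Aφ Bφ))) ::ₘ
        ↑(ΦA ++ ΦB ++ [G1, G2])) (some (.or Aφt Bφt))
      apply CKD.andL₁
      refine CKD.orL (CKD.orR₁ ?_) (CKD.orR₂ ?_)
      · refine h1A.weak (Multiset.cons_le_cons _ ?_)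
        simp only [← Multiset.coe_add]
        exact le_trans (Multiset.le_add_right _ _) (Multiset.le_add_right _ _)
      · refine h1B.weak (Multiset.cons_le_cons _ ?_)
        simp only [← Multiset.coe_add]
        exact le_trans (Multiset.le_add_left _ _) (Multiset.le_add_right _ _)
    · show CKD (.or Aφt Bφt ::ₘ ↑(ΦA ++ ΦB ++ [G1, G2]))
        (some (.and (.or (S.tr Aφ) (S.tr Bφ)) (.atom (S.angle (.or Aφ Bφ)))))
      refine CKD.orL ?_ ?_
      · have hcut : CKD (Aφt ::ₘ ↑(ΦA ++ ΦB ++ [G1, G2])) (some (S.tr Aφ)) := by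
          refine h2A.weak (Multiset.cons_le_cons _ ?_)
          simp only [← Multiset.coe_add]
          exact le_trans (Multiset.le_add_right _ _) (Multiset.le_add_right _ _)
        refine CKD.cut hcut ?_
        refine CKD.andR (CKD.orR₁ (CKD.id_mem (by simp))) ?_
        refine CKD.impL_mem (A := .atom (S.angle Aφ))
          (B := .atom (S.angle (.or Aφ Bφ))) (by simp [hG1]) ?_ (CKD.id_mem (by simp))
        exact CKD.contract_mem (by simp) (head_lemma S Aφ _)
      · have hcut : CKD (Bφt ::ₘ ↑(ΦA ++ ΦB ++ [G1, G2])) (some (S.tr Bφ)) := by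
          refine h2B.weak (Multiset.cons_le_cons _ ?_)
          simp only [← Multiset.coe_add]
          exact le_trans (Multiset.le_add_left _ _) (Multiset.le_add_right _ _)
        refine CKD.cut hcut ?_
        refine CKD.andR (CKD.orR₂ (CKD.id_mem (by simp))) ?_
        refine CKD.impL_mem (A := .atom (S.angle Bφ))
          (B := .atom (S.angle (.or Aφ Bφ))) (by simp [hG2]) ?_ (CKD.id_mem (by simp))
        exact CKD.contract_mem (by simp) (head_lemma S Bφ _)
  | @dia A hA ihA =>
    obtain ⟨ΦA, hstA, h1A, h2A⟩ := ihA
    set Aφ := A.subst φ with hAφ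
    set Aφt := A.subst (fun i => S.tr (φ i)) with hAφt
    set G : Fml ℕ := .imp (.dia (.atom (S.angle Aφ))) (.atom (S.angle (.dia Aφ))) with hG
    refine ⟨ΦA.map Fml.box ++ [G], ?_, ?_, ?_⟩
    · intro F hF
      simp only [List.mem_append, List.mem_map, List.mem_singleton] at hF
      rcases hF with ⟨F', hF', rfl⟩ | rfl
      · obtain ⟨hh, ha, hd⟩ := hstA F' hF'
        refine ⟨ModalHorn.box hh, ha, ?_⟩
        show CKD 0 (some (.box (S.std F')))
        have := hd.kbox
        simpa using this
      · refine ⟨ModalHorn.imp (DiaConj.single (DiaPowAtom.dia (.atom _))) (ModalHorn.atom _),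
          ⟨angled_angle S _, angled_angle S _⟩, ?_⟩
        show CKD 0 (some (.imp (.dia (S.std (.atom (S.angle Aφ))))
          (S.std (.atom (S.angle (.dia Aφ))))))
        rw [std_angle, std_angle]
        exact CKD.impR CKD.id
    · show CKD (.and (.dia (S.tr Aφ)) (.atom (S.angle (.dia Aφ))) ::ₘ
        ↑(ΦA.map Fml.box ++ [G])) (some (.dia Aφt))
      apply CKD.andL₁
      refine (h1A.kdia).weak (Multiset.cons_le_cons _ ?_)
      rw [Multiset.map_coe]
      simp only [← Multiset.coe_add]
      exact Multiset.le_add_right _ _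
    · show CKD (.dia Aφt ::ₘ ↑(ΦA.map Fml.box ++ [G]))
        (some (.and (.dia (S.tr Aφ)) (.atom (S.angle (.dia Aφ)))))
      refine CKD.andR ?_ ?_
      · refine (h2A.kdia).weak (Multiset.cons_le_cons _ ?_)
        rw [Multiset.map_coe]
        simp only [← Multiset.coe_add]
        exact Multiset.le_add_right _ _
      · refine CKD.impL_mem (A := .dia (.atom (S.angle Aφ)))
          (B := .atom (S.angle (.dia Aφ))) (by simp [hG]) ?_ (CKD.id_mem (by simp))
        have hseq : CKD (Aφt ::ₘ (↑ΦA : Multiset (Fml ℕ))) (some (.atom (S.angle Aφ))) :=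
          CKD.cut h2A (head_lemma S Aφ _)
        refine (hseq.kdia).weak (Multiset.cons_le_cons _ ?_)
        rw [Multiset.map_coe]
        simp only [← Multiset.coe_add]
        exact Multiset.le_add_right _ _

end Stmt5

/-- commutation of the translation `t` with basic formulas. -/
theorem statement_5 (S : Angling ℕ) (k : ℕ) (A : Fml (Fin k)) (hA : Basic A)
    (φ : Fin k → Fml ℕ) :
    ∃ Φ : List (Fml ℕ),
      (∀ F ∈ Φ, ModalHorn F ∧ F.AtomsIn S.Angled) ∧
      Derives (CKSys (fun _ : Fml ℕ => False))
        (S.tr (A.subst φ) ::ₘ (↑Φ : Multiset (Fml ℕ)))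
        (some (A.subst fun i => S.tr (φ i))) ∧
      Derives (CKSys (fun _ : Fml ℕ => False))
        ((A.subst fun i => S.tr (φ i)) ::ₘ (↑Φ : Multiset (Fml ℕ)))
        (some (S.tr (A.subst φ))) ∧
      Derives (CKSys (fun _ : Fml ℕ => False)) 0 (some (conj (Φ.map S.std))) := by
  obtain ⟨Φ, hst, h1, h2⟩ := aux_5 S k A hA φ
  refine ⟨Φ, fun F hF => ⟨(hst F hF).1, (hst F hF).2.1⟩, h1, h2, ?_⟩
  apply conj_of_all
  intro F hF
  simp only [List.mem_map] at hF
  obtain ⟨F', hF', rfl⟩ := hF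
  exact (hst F' hF').2.2

end UPT
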